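/- Theorem 2.3(c): Under assumptions (H1) and (H2), for every x ∈ S it holds that F(x) = 0 if and only if x ∈ Φ, i.e., the equilibrium points of F on S are exactly the KKT points of the nonlinear programming problem. -/

import Mathlib

open Matrix Set Filter

noncomputable section

/-- The gradient of `f : ℝⁿ → ℝ` at `x`, as the vector of partial derivatives. -/
def grad {n : ℕ} (f : (Fin n → ℝ) → ℝ) (x : Fin n → ℝ) : Fin n → ℝ :=
  fun j => fderiv ℝ f x (Pi.single j 1)

/-- The feasible set `S`. -/
def feas {n m k : ℕ} (h : Fin m → (Fin n → ℝ) → ℝ) (g : Fin k → (Fin n → ℝ) → ℝ) :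
    Set (Fin n → ℝ) :=
  {x | (∀ i, h i x = 0) ∧ (∀ j, g j x ≤ 0)}

/-- Jacobian of the equality constraints (rows `∇h_i(x)`). -/
def matA {n m : ℕ} (h : Fin m → (Fin n → ℝ) → ℝ) (x : Fin n → ℝ) :
    Matrix (Fin m) (Fin n) ℝ :=
  Matrix.of fun i => grad (h i) x

/-- Jacobian of the inequality constraints (rows `∇g_j(x)`). -/
def matB {n k : ℕ} (g : Fin k → (Fin n → ℝ) → ℝ) (x : Fin n → ℝ) :
    Matrix (Fin k) (Fin n) ℝ :=
  Matrix.of fun j => grad (g j) x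

/-- `H(x) = I − Aᵀ(AAᵀ)⁻¹A`. -/
def matH {n m : ℕ} (h : Fin m → (Fin n → ℝ) → ℝ) (x : Fin n → ℝ) :
    Matrix (Fin n) (Fin n) ℝ :=
  1 - (matA h x)ᵀ * (matA h x * (matA h x)ᵀ)⁻¹ * matA h x

/-- `Q(x) = B(x)H(x)B(x)ᵀ − diag(g(x))`. -/
def matQ {n m k : ℕ} (h : Fin m → (Fin n → ℝ) → ℝ) (g : Fin k → (Fin n → ℝ) → ℝ)
    (x : Fin n → ℝ) : Matrix (Fin k) (Fin k) ℝ :=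
  matB g x * matH h x * (matB g x)ᵀ - Matrix.diagonal (fun j => g j x)

/-- Assumption (H1). -/
def hypH1 {n m k : ℕ} (θ : (Fin n → ℝ) → ℝ) (h : Fin m → (Fin n → ℝ) → ℝ)
    (g : Fin k → (Fin n → ℝ) → ℝ) : Prop :=
  (feas h g).Nonempty ∧ ∀ x₀ ∈ feas h g, IsCompact {x ∈ feas h g | θ x ≤ θ x₀}

/-- Assumption (H2). -/
def hypH2 {n m k : ℕ} (h : Fin m → (Fin n → ℝ) → ℝ) (g : Fin k → (Fin n → ℝ) → ℝ) : Prop :=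
  ∀ x ∈ feas h g,
    LinearIndependent ℝ
      (Sum.elim (fun i : Fin m => grad (h i) x)
        (fun j : {j : Fin k // g j x = 0} => grad (g (j : Fin k)) x))

/-- `P(x) = Q(x)⁻¹ B(x) H(x)`. -/
def matP {n m k : ℕ} (h : Fin m → (Fin n → ℝ) → ℝ) (g : Fin k → (Fin n → ℝ) → ℝ)
    (x : Fin n → ℝ) : Matrix (Fin k) (Fin n) ℝ :=
  (matQ h g x)⁻¹ * matB g x * matH h x

/-- `v(x) = P(x)(∇θ(x))ᵀ`. -/
def vecv {n m k : ℕ} (θ : (Fin n → ℝ) → ℝ) (h : Fin m → (Fin n → ℝ) → ℝ)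
    (g : Fin k → (Fin n → ℝ) → ℝ) (x : Fin n → ℝ) : Fin k → ℝ :=
  (matP h g x).mulVec (grad θ x)

/-- componentwise positive part. -/
def pPart {k : ℕ} (w : Fin k → ℝ) : Fin k → ℝ := fun j => max 0 (w j)

/-- `R₃(x)`. -/
def matR3 {n k : ℕ} (b c : Fin k → (Fin n → ℝ) → ℝ) (p : Fin k → ℕ) (x : Fin n → ℝ)
    (v : Fin k → ℝ) : Matrix (Fin k) (Fin k) ℝ :=
  Matrix.diagonal (fun j => b j x + c j x * (max 0 (v j)) ^ (2 * p j))

/-- The vector field `F(x)` of (2.4), (2.5). -/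
def vecF {n m k : ℕ} (θ : (Fin n → ℝ) → ℝ) (h : Fin m → (Fin n → ℝ) → ℝ)
    (g : Fin k → (Fin n → ℝ) → ℝ)
    (R1 : (Fin n → ℝ) → Matrix (Fin n) (Fin n) ℝ)
    (R2 : (Fin n → ℝ) → Matrix (Fin k) (Fin k) ℝ)
    (a b c : Fin k → (Fin n → ℝ) → ℝ) (p : Fin k → ℕ) (x : Fin n → ℝ) : Fin n → ℝ :=
  -(((matH h x - (matP h g x)ᵀ * matQ h g x * matP h g x) * R1 x *
      (matH h x - (matP h g x)ᵀ * matQ h g x * matP h g x)).mulVec (grad θ x))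
  - ((matP h g x)ᵀ * Matrix.diagonal (fun j => g j x) *
      (R2 x * Matrix.diagonal (fun j => g j x) - Matrix.diagonal (fun j => a j x))).mulVec
        (vecv θ h g x)
  - ((matP h g x)ᵀ * matR3 b c p x (vecv θ h g x)).mulVec (pPart (vecv θ h g x))

/-- The set `Φ` of KKT points. -/
def KKTset {n m k : ℕ} (θ : (Fin n → ℝ) → ℝ) (h : Fin m → (Fin n → ℝ) → ℝ)
    (g : Fin k → (Fin n → ℝ) → ℝ) : Set (Fin n → ℝ) :=
  {x | x ∈ feas h g ∧ ∃ (lam : Fin m → ℝ) (mu : Fin k → ℝ),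
    (∀ j, 0 ≤ mu j) ∧
    grad θ x + (∑ i, lam i • grad (h i) x) + (∑ j, mu j • grad (g j) x) = 0 ∧
    (∑ j, mu j * g j x) = 0}

/-!
Let `H` be the orthogonal projector onto `ker A(x)`, `v = P∇θ`, `M = H − PᵀQP` and `D = diag g(x)`.
Pairing `F` with `∇θ` gives
`−(M∇θ)ᵀR₁(M∇θ) − (Dv)ᵀR₂(Dv) + Σ aⱼgⱼvⱼ² − Σ (R₃)ⱼⱼ(vⱼ⁺)²`,
a sum of nonpositive terms, so `F = 0` forces `M∇θ = 0`, `v ≤ 0` and `Dv = 0`; conversely these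
three conditions make every term of `F` vanish. As `M∇θ = H(∇θ − Bᵀv)`, they say that
`∇θ − Bᵀv` lies in the range of `Aᵀ`, i.e. the KKT conditions hold with `μ = −v`. In the other
direction, complementarity gives `Dμ = 0`, hence `PBᵀμ = μ` and so `v = −μ`. Assumption (H2)
makes `AAᵀ` and `Q` positive definite, so the inverses in `H` and `P` are genuine.
-/

lemma max_zero_mul_self (t : ℝ) : max 0 t * t = max 0 t ^ 2 := by
  rcases le_total t 0 with ht | ht
  · rw [max_eq_left ht]; ring
  · rw [max_eq_right ht]; ring

lemma add_mul_pow_pos {b c t : ℝ} (hb : 0 ≤ b) (hc : 0 ≤ c) (hbc : 0 < b + c) (ht : 0 < t)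
    (N : ℕ) : 0 < b + c * t ^ N := by
  rcases hb.lt_or_eq with hb | rfl
  · exact add_pos_of_pos_of_nonneg hb (mul_nonneg hc (pow_nonneg ht.le N))
  · rw [zero_add] at hbc ⊢
    exact mul_pos hbc (pow_pos ht N)

section KerProj

variable {R m n : Type*} [CommRing R] [Fintype m] [Fintype n] [DecidableEq m] [DecidableEq n]

def kerProj (A : Matrix m n R) : Matrix n n R := 1 - Aᵀ * (A * Aᵀ)⁻¹ * A

lemma kerProj_transpose (A : Matrix m n R) : (kerProj A)ᵀ = kerProj A := by
  rw [kerProj, transpose_sub, transpose_one, transpose_mul, transpose_mul, transpose_transpose,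
    transpose_nonsing_inv, transpose_mul, transpose_transpose, Matrix.mul_assoc]

variable {A : Matrix m n R}

lemma mul_kerProj (hA : IsUnit (A * Aᵀ).det) : A * kerProj A = 0 := by
  rw [kerProj, Matrix.mul_sub, Matrix.mul_one, ← Matrix.mul_assoc, ← Matrix.mul_assoc,
    mul_nonsing_inv _ hA, Matrix.one_mul, sub_self]

lemma kerProj_mul_transpose (hA : IsUnit (A * Aᵀ).det) : kerProj A * Aᵀ = 0 := by
  simpa [transpose_mul, kerProj_transpose] using congrArg transpose (mul_kerProj hA)

lemma kerProj_mul_self (hA : IsUnit (A * Aᵀ).det) : kerProj A * kerProj A = kerProj A := by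
  conv_lhs => arg 1; rw [kerProj]
  rw [Matrix.sub_mul, Matrix.one_mul, Matrix.mul_assoc, mul_kerProj hA, Matrix.mul_zero, sub_zero]

lemma eq_transpose_mulVec_of_kerProj_mulVec_eq_zero {y : n → R} (hy : kerProj A *ᵥ y = 0) :
    y = Aᵀ *ᵥ (((A * Aᵀ)⁻¹ * A) *ᵥ y) := by
  rw [kerProj, sub_mulVec, one_mulVec, sub_eq_zero] at hy
  rwa [mulVec_mulVec, ← Matrix.mul_assoc]

end KerProj

lemma isUnit_det_mul_transpose_of_linearIndependent {m n : Type*} [Fintype m] [Fintype n]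
    [DecidableEq m] {A : Matrix m n ℝ} (hA : LinearIndependent ℝ A.row) :
    IsUnit (A * Aᵀ).det := by
  have hpos := PosDef.mul_conjTranspose_self A (vecMul_injective_iff.2 hA)
  rw [conjTranspose_eq_transpose_of_trivial] at hpos
  exact (isUnit_iff_isUnit_det _).1 hpos.isUnit

lemma eq_zero_of_transpose_mulVec_eq {m n k : Type*} [Fintype m] [Fintype k]
    {A : Matrix m n ℝ} {B : Matrix k n ℝ} {d : k → ℝ}
    (hli : LinearIndependent ℝ (Sum.elim (fun i => A i) fun j : {j // d j = 0} => B j))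
    {z : k → ℝ} {w : m → ℝ} (hz : ∀ j, d j ≠ 0 → z j = 0) (h : Bᵀ *ᵥ z = Aᵀ *ᵥ w) :
    z = 0 := by
  have hinactive : ∑ j : {j // ¬d j = 0}, z j • B j = 0 :=
    Finset.sum_eq_zero fun j _ => by rw [hz j j.2, zero_smul]
  have hactive : ∑ j : {j // d j = 0}, z j • B j = ∑ j, z j • B j := by
    rw [← Fintype.sum_subtype_add_sum_subtype (fun j => d j = 0) (fun j => z j • B j),
      hinactive, add_zero]
  have hcomb := Fintype.linearIndependent_iff.1 hli (Sum.elim (-w) fun j => z j) (by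
    rw [Fintype.sum_sum_type]
    simp only [Sum.elim_inl, Sum.elim_inr, Pi.neg_apply, neg_smul, Finset.sum_neg_distrib,
      hactive, ← vecMul_eq_sum, ← mulVec_transpose, h, neg_add_cancel])
  funext j
  by_cases hj : d j = 0
  · exact hcomb (Sum.inr ⟨j, hj⟩)
  · exact hz j hj

section Flow

variable {m n k : Type*} [Fintype m] [Fintype n] [Fintype k]
  [DecidableEq m] [DecidableEq n] [DecidableEq k]

/- For `A = A(x)`, `B = B(x)` and `d = g(x)` these are the paper's `Q(x)`, `P(x)`,
`H(x) − P(x)ᵀQ(x)P(x)` and, with `r` the diagonal of `R₃(x)` and `y = ∇θ(x)`, `F(x)`. -/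

def nlpQ (A : Matrix m n ℝ) (B : Matrix k n ℝ) (d : k → ℝ) : Matrix k k ℝ :=
  B * kerProj A * Bᵀ - diagonal d

def nlpP (A : Matrix m n ℝ) (B : Matrix k n ℝ) (d : k → ℝ) : Matrix k n ℝ :=
  (nlpQ A B d)⁻¹ * B * kerProj A

def nlpM (A : Matrix m n ℝ) (B : Matrix k n ℝ) (d : k → ℝ) : Matrix n n ℝ :=
  kerProj A - (nlpP A B d)ᵀ * nlpQ A B d * nlpP A B d

def nlpField (A : Matrix m n ℝ) (B : Matrix k n ℝ) (d : k → ℝ) (R₁ : Matrix n n ℝ)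
    (R₂ : Matrix k k ℝ) (a r : k → ℝ) (y : n → ℝ) : n → ℝ :=
  -((nlpM A B d * R₁ * nlpM A B d) *ᵥ y)
  - ((nlpP A B d)ᵀ * diagonal d * (R₂ * diagonal d - diagonal a)) *ᵥ (nlpP A B d *ᵥ y)
  - ((nlpP A B d)ᵀ * diagonal r) *ᵥ fun j => max 0 ((nlpP A B d *ᵥ y) j)

variable {A : Matrix m n ℝ} {B : Matrix k n ℝ} {d : k → ℝ}

omit [Fintype k] in
lemma nlpQ_transpose : (nlpQ A B d)ᵀ = nlpQ A B d := by
  rw [nlpQ, transpose_sub, transpose_mul, transpose_mul, transpose_transpose, kerProj_transpose,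
    diagonal_transpose, Matrix.mul_assoc]

lemma dotProduct_nlpQ_mulVec (hA : IsUnit (A * Aᵀ).det) (z : k → ℝ) :
    z ⬝ᵥ (nlpQ A B d *ᵥ z) =
      ((kerProj A * Bᵀ) *ᵥ z) ⬝ᵥ ((kerProj A * Bᵀ) *ᵥ z) - ∑ j, d j * z j ^ 2 := by
  have hgram : B * kerProj A * Bᵀ = (kerProj A * Bᵀ)ᵀ * (kerProj A * Bᵀ) := by
    simp only [transpose_mul, transpose_transpose, kerProj_transpose, Matrix.mul_assoc]
    rw [← Matrix.mul_assoc (kerProj A) (kerProj A), kerProj_mul_self hA]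
  rw [nlpQ, hgram, sub_mulVec, dotProduct_sub, ← mulVec_mulVec, dotProduct_transpose_mulVec]
  congr 1
  simp only [dotProduct, mulVec_diagonal]
  exact Finset.sum_congr rfl fun j _ => by ring

lemma posDef_nlpQ (hd : ∀ j, d j ≤ 0)
    (hli : LinearIndependent ℝ (Sum.elim (fun i => A i) fun j : {j // d j = 0} => B j)) :
    (nlpQ A B d).PosDef := by
  have hA : IsUnit (A * Aᵀ).det :=
    isUnit_det_mul_transpose_of_linearIndependent (hli.comp Sum.inl Sum.inl_injective)
  refine posDef_iff_dotProduct_mulVec.2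
    ⟨isHermitian_iff_isSymm.2 nlpQ_transpose, fun z hz => ?_⟩
  rw [star_trivial, dotProduct_nlpQ_mulVec hA]
  set u := (kerProj A * Bᵀ) *ᵥ z
  have hterm : ∀ j, 0 ≤ -(d j * z j ^ 2) := fun j =>
    neg_nonneg.2 (mul_nonpos_of_nonpos_of_nonneg (hd j) (sq_nonneg _))
  have hsum : 0 ≤ -∑ j, d j * z j ^ 2 := by
    rw [← Finset.sum_neg_distrib]; exact Finset.sum_nonneg fun j _ => hterm j
  have hu0 : 0 ≤ u ⬝ᵥ u := Finset.sum_nonneg fun i _ => mul_self_nonneg (u i)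
  refine lt_of_le_of_ne (by linarith) fun h0 => hz ?_
  have hu : u = 0 := dotProduct_self_eq_zero.1 (by linarith)
  have hz' : ∀ j, d j ≠ 0 → z j = 0 := by
    have h0' : ∑ j, -(d j * z j ^ 2) = 0 := by
      rw [Finset.sum_neg_distrib]; linarith
    intro j hj
    have := (Finset.sum_eq_zero_iff_of_nonneg fun j _ => hterm j).1 h0' j (Finset.mem_univ j)
    simpa [hj] using this
  refine eq_zero_of_transpose_mulVec_eq hli hz' (eq_transpose_mulVec_of_kerProj_mulVec_eq_zero ?_)
  rwa [mulVec_mulVec]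

lemma nlpM_transpose : (nlpM A B d)ᵀ = nlpM A B d := by
  rw [nlpM, transpose_sub, kerProj_transpose, transpose_mul, transpose_mul, transpose_transpose,
    nlpQ_transpose, Matrix.mul_assoc]

lemma nlpP_mul_transpose_eq_zero (hA : IsUnit (A * Aᵀ).det) : nlpP A B d * Aᵀ = 0 := by
  rw [nlpP, Matrix.mul_assoc, kerProj_mul_transpose hA, Matrix.mul_zero]

lemma nlpP_mul_transpose_eq_one_add (hQ : IsUnit (nlpQ A B d).det) :
    nlpP A B d * Bᵀ = 1 + (nlpQ A B d)⁻¹ * diagonal d := by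
  have hgram : B * kerProj A * Bᵀ = nlpQ A B d + diagonal d := by rw [nlpQ, sub_add_cancel]
  rw [nlpP, Matrix.mul_assoc, Matrix.mul_assoc, ← Matrix.mul_assoc B, hgram, Matrix.mul_add,
    nonsing_inv_mul _ hQ]

lemma transpose_nlpP_mul_nlpQ (hQ : IsUnit (nlpQ A B d).det) :
    (nlpP A B d)ᵀ * nlpQ A B d = kerProj A * Bᵀ := by
  rw [nlpP, transpose_mul, transpose_mul, kerProj_transpose, transpose_nonsing_inv,
    nlpQ_transpose]
  simp only [Matrix.mul_assoc, nonsing_inv_mul _ hQ, Matrix.mul_one]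

lemma nlpM_mulVec (hQ : IsUnit (nlpQ A B d).det) (y : n → ℝ) :
    nlpM A B d *ᵥ y = kerProj A *ᵥ (y - Bᵀ *ᵥ (nlpP A B d *ᵥ y)) := by
  rw [nlpM, sub_mulVec, mulVec_sub, transpose_nlpP_mul_nlpQ hQ, mulVec_mulVec, mulVec_mulVec]

lemma dotProduct_nlpField (R₁ : Matrix n n ℝ) (R₂ : Matrix k k ℝ) (a r : k → ℝ) {y : n → ℝ}
    {v : k → ℝ} (hv : nlpP A B d *ᵥ y = v) :
    y ⬝ᵥ nlpField A B d R₁ R₂ a r y =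
      -((nlpM A B d *ᵥ y) ⬝ᵥ (R₁ *ᵥ (nlpM A B d *ᵥ y)))
        - (diagonal d *ᵥ v) ⬝ᵥ (R₂ *ᵥ (diagonal d *ᵥ v))
        + ∑ j, a j * (d j * v j ^ 2) - ∑ j, r j * max 0 (v j) ^ 2 := by
  have hP : ∀ w, y ⬝ᵥ ((nlpP A B d)ᵀ *ᵥ w) = w ⬝ᵥ v := fun w => by
    rw [dotProduct_transpose_mulVec, hv]
  have hM : y ⬝ᵥ ((nlpM A B d * R₁ * nlpM A B d) *ᵥ y) =
      (nlpM A B d *ᵥ y) ⬝ᵥ (R₁ *ᵥ (nlpM A B d *ᵥ y)) := by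
    rw [← mulVec_mulVec, ← mulVec_mulVec]
    nth_rewrite 1 [← nlpM_transpose]
    rw [dotProduct_transpose_mulVec, dotProduct_comm]
  have hR₂ : y ⬝ᵥ (((nlpP A B d)ᵀ * diagonal d * (R₂ * diagonal d - diagonal a)) *ᵥ v) =
      (diagonal d *ᵥ v) ⬝ᵥ (R₂ *ᵥ (diagonal d *ᵥ v)) - ∑ j, a j * (d j * v j ^ 2) := by
    rw [Matrix.mul_assoc, ← mulVec_mulVec, hP, Matrix.mul_sub, sub_mulVec, sub_dotProduct,
      ← mulVec_mulVec, ← mulVec_mulVec, dotProduct_comm, ← diagonal_transpose d,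
      dotProduct_transpose_mulVec, diagonal_transpose]
    congr 1
    · exact dotProduct_comm _ _
    · simp only [dotProduct, mulVec_diagonal, diagonal_mul_diagonal]
      exact Finset.sum_congr rfl fun j _ => by ring
  have hR₃ : y ⬝ᵥ (((nlpP A B d)ᵀ * diagonal r) *ᵥ fun j => max 0 (v j)) =
      ∑ j, r j * max 0 (v j) ^ 2 := by
    rw [← mulVec_mulVec, hP]
    simp only [dotProduct, mulVec_diagonal]
    exact Finset.sum_congr rfl fun j _ => by rw [mul_assoc, max_zero_mul_self]
  rw [nlpField, hv, dotProduct_sub, dotProduct_sub, dotProduct_neg, hM, hR₂, hR₃]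
  ring

lemma stationary_of_nlpField_eq_zero {R₁ : Matrix n n ℝ} {R₂ : Matrix k k ℝ} {a r : k → ℝ}
    {y : n → ℝ} {v : k → ℝ} (hd : ∀ j, d j ≤ 0) (hR₁ : R₁.PosDef) (hR₂ : R₂.PosSemidef)
    (ha : ∀ j, 0 ≤ a j) (hpd : R₂.PosDef ∨ (diagonal a).PosDef) (hr : ∀ j, 0 ≤ r j)
    (hrv : ∀ j, 0 < v j → 0 < r j) (hv : nlpP A B d *ᵥ y = v)
    (hF : nlpField A B d R₁ R₂ a r y = 0) :
    nlpM A B d *ᵥ y = 0 ∧ (∀ j, v j ≤ 0) ∧ diagonal d *ᵥ v = 0 := by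
  have henergy := dotProduct_nlpField R₁ R₂ a r hv
  rw [hF, dotProduct_zero] at henergy
  set u := nlpM A B d *ᵥ y
  set w := diagonal d *ᵥ v
  have hterm₃ : ∀ j, a j * (d j * v j ^ 2) ≤ 0 := fun j =>
    mul_nonpos_of_nonneg_of_nonpos (ha j) (mul_nonpos_of_nonpos_of_nonneg (hd j) (sq_nonneg _))
  have hterm₄ : ∀ j, 0 ≤ r j * max 0 (v j) ^ 2 := fun j => mul_nonneg (hr j) (sq_nonneg _)
  have h₁ : 0 ≤ u ⬝ᵥ (R₁ *ᵥ u) := by simpa using hR₁.posSemidef.dotProduct_mulVec_nonneg u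
  have h₂ : 0 ≤ w ⬝ᵥ (R₂ *ᵥ w) := by simpa using hR₂.dotProduct_mulVec_nonneg w
  have h₃ : ∑ j, a j * (d j * v j ^ 2) ≤ 0 := Finset.sum_nonpos fun j _ => hterm₃ j
  have h₄ : 0 ≤ ∑ j, r j * max 0 (v j) ^ 2 := Finset.sum_nonneg fun j _ => hterm₄ j
  refine ⟨?_, fun j => ?_, ?_⟩
  · by_contra hu
    have := hR₁.dotProduct_mulVec_pos hu
    rw [star_trivial] at this
    linarith
  · have hj := (Finset.sum_eq_zero_iff_of_nonneg fun j _ => hterm₄ j).1 (by linarith) j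
      (Finset.mem_univ j)
    by_contra! hvj
    have := mul_pos (hrv j hvj) (pow_pos (hvj.trans_le (le_max_right 0 _)) 2)
    linarith
  · rcases hpd with hR₂ | ha'
    · by_contra hw
      have := hR₂.dotProduct_mulVec_pos hw
      rw [star_trivial] at this
      linarith
    · funext j
      have hj := (Finset.sum_eq_zero_iff_of_nonpos fun j _ => hterm₃ j).1 (by linarith) j
        (Finset.mem_univ j)
      have hdv : d j * v j ^ 2 = 0 :=
        (mul_eq_zero.1 hj).resolve_left (posDef_diagonal_iff.1 ha' j).ne'
      show (diagonal d *ᵥ v) j = 0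
      rw [mulVec_diagonal]
      exact pow_eq_zero_iff two_ne_zero |>.1 (by linear_combination d j * hdv)

lemma nlpField_eq_zero_of_stationary (R₁ : Matrix n n ℝ) (R₂ : Matrix k k ℝ) (a r : k → ℝ)
    {y : n → ℝ} {v : k → ℝ} (hv : nlpP A B d *ᵥ y = v) (hM : nlpM A B d *ᵥ y = 0)
    (hv₀ : ∀ j, v j ≤ 0) (hdv : diagonal d *ᵥ v = 0) :
    nlpField A B d R₁ R₂ a r y = 0 := by
  have hdvj : ∀ j, d j * v j = 0 := fun j => (mulVec_diagonal d v j).symm.trans (congrFun hdv j)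
  have hpos : (fun j => max 0 (v j)) = 0 := funext fun j => max_eq_left (hv₀ j)
  have hR₂ : (diagonal d * (R₂ * diagonal d - diagonal a)) *ᵥ v = 0 := by
    rw [Matrix.mul_sub, sub_mulVec, ← mulVec_mulVec, ← mulVec_mulVec, hdv, mulVec_zero,
      mulVec_zero, zero_sub, neg_eq_zero, diagonal_mul_diagonal]
    funext j
    rw [mulVec_diagonal, Pi.zero_apply, mul_right_comm, hdvj, zero_mul]
  have hR₁ : (nlpM A B d * R₁ * nlpM A B d) *ᵥ y = 0 := by
    rw [← mulVec_mulVec, hM, mulVec_zero]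
  rw [nlpField, hv, hpos, hR₁, Matrix.mul_assoc _ (diagonal d), ← mulVec_mulVec v, hR₂]
  simp only [mulVec_zero, neg_zero, sub_zero]

lemma exists_kkt_of_stationary (hQ : IsUnit (nlpQ A B d).det) {y : n → ℝ} {v : k → ℝ}
    (hv : nlpP A B d *ᵥ y = v) (hM : nlpM A B d *ᵥ y = 0) (hv₀ : ∀ j, v j ≤ 0)
    (hdv : diagonal d *ᵥ v = 0) :
    ∃ lam mu, (∀ j, 0 ≤ mu j) ∧ y + Aᵀ *ᵥ lam + Bᵀ *ᵥ mu = 0 ∧ mu ⬝ᵥ d = 0 := by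
  rw [nlpM_mulVec hQ, hv] at hM
  refine ⟨-(((A * Aᵀ)⁻¹ * A) *ᵥ (y - Bᵀ *ᵥ v)), -v, fun j => neg_nonneg.2 (hv₀ j), ?_, ?_⟩
  · rw [mulVec_neg, mulVec_neg, ← eq_transpose_mulVec_of_kerProj_mulVec_eq_zero hM]
    abel
  · rw [neg_dotProduct, neg_eq_zero]
    exact Finset.sum_eq_zero fun j _ => by
      rw [mul_comm, ← mulVec_diagonal]; exact congrFun hdv j

lemma diagonal_mulVec_eq_zero_of_dotProduct_eq_zero {mu : k → ℝ} (hmu : ∀ j, 0 ≤ mu j)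
    (hd : ∀ j, d j ≤ 0) (h : mu ⬝ᵥ d = 0) : diagonal d *ᵥ mu = 0 := by
  funext j
  rw [mulVec_diagonal, Pi.zero_apply, mul_comm]
  exact (Finset.sum_eq_zero_iff_of_nonpos fun j _ =>
    mul_nonpos_of_nonneg_of_nonpos (hmu j) (hd j)).1 h j (Finset.mem_univ j)

lemma stationary_of_kkt (hA : IsUnit (A * Aᵀ).det) (hQ : IsUnit (nlpQ A B d).det)
    (hd : ∀ j, d j ≤ 0) {y : n → ℝ} {v : k → ℝ} (hv : nlpP A B d *ᵥ y = v) {lam : m → ℝ}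
    {mu : k → ℝ} (hmu : ∀ j, 0 ≤ mu j) (hkkt : y + Aᵀ *ᵥ lam + Bᵀ *ᵥ mu = 0)
    (hcompl : mu ⬝ᵥ d = 0) :
    nlpM A B d *ᵥ y = 0 ∧ (∀ j, v j ≤ 0) ∧ diagonal d *ᵥ v = 0 := by
  have hdmu := diagonal_mulVec_eq_zero_of_dotProduct_eq_zero hmu hd hcompl
  have hy : y = -(Aᵀ *ᵥ lam) - Bᵀ *ᵥ mu := by linear_combination hkkt
  have hvmu : v = -mu := by
    rw [← hv, hy, mulVec_sub, mulVec_neg, mulVec_mulVec, mulVec_mulVec,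
      nlpP_mul_transpose_eq_zero hA, nlpP_mul_transpose_eq_one_add hQ, zero_mulVec, add_mulVec,
      one_mulVec, ← mulVec_mulVec, hdmu, mulVec_zero, neg_zero, add_zero, zero_sub]
  subst hvmu
  refine ⟨?_, fun j => neg_nonpos.2 (hmu j), by rw [mulVec_neg, hdmu, neg_zero]⟩
  have hres : y - Bᵀ *ᵥ -mu = -(Aᵀ *ᵥ lam) := by rw [hy, mulVec_neg]; abel
  rw [nlpM_mulVec hQ, hv, hres, mulVec_neg, mulVec_mulVec, kerProj_mul_transpose hA,
    zero_mulVec, neg_zero]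

theorem nlpField_eq_zero_iff_exists_kkt {R₁ : Matrix n n ℝ} {R₂ : Matrix k k ℝ}
    {a r : k → ℝ} {y : n → ℝ} {v : k → ℝ} (hd : ∀ j, d j ≤ 0)
    (hli : LinearIndependent ℝ (Sum.elim (fun i => A i) fun j : {j // d j = 0} => B j))
    (hR₁ : R₁.PosDef) (hR₂ : R₂.PosSemidef) (ha : ∀ j, 0 ≤ a j)
    (hpd : R₂.PosDef ∨ (diagonal a).PosDef) (hr : ∀ j, 0 ≤ r j)
    (hrv : ∀ j, 0 < v j → 0 < r j) (hv : nlpP A B d *ᵥ y = v) :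
    nlpField A B d R₁ R₂ a r y = 0 ↔
      ∃ lam mu, (∀ j, 0 ≤ mu j) ∧ y + Aᵀ *ᵥ lam + Bᵀ *ᵥ mu = 0 ∧ mu ⬝ᵥ d = 0 := by
  have hA : IsUnit (A * Aᵀ).det :=
    isUnit_det_mul_transpose_of_linearIndependent (hli.comp Sum.inl Sum.inl_injective)
  have hQ : IsUnit (nlpQ A B d).det := (isUnit_iff_isUnit_det _).1 (posDef_nlpQ hd hli).isUnit
  constructor
  · intro hF
    obtain ⟨hM, hv₀, hdv⟩ := stationary_of_nlpField_eq_zero hd hR₁ hR₂ ha hpd hr hrv hv hF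
    exact exists_kkt_of_stationary hQ hv hM hv₀ hdv
  · rintro ⟨lam, mu, hmu, hkkt, hcompl⟩
    obtain ⟨hM, hv₀, hdv⟩ := stationary_of_kkt hA hQ hd hv hmu hkkt hcompl
    exact nlpField_eq_zero_of_stationary R₁ R₂ a r hv hM hv₀ hdv

end Flow

theorem stmt_11_general
    {n m k : ℕ}
    (θ : (Fin n → ℝ) → ℝ) (h : Fin m → (Fin n → ℝ) → ℝ) (g : Fin k → (Fin n → ℝ) → ℝ)
    (hH2 : hypH2 h g)
    (R1 : (Fin n → ℝ) → Matrix (Fin n) (Fin n) ℝ)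
    (R2 : (Fin n → ℝ) → Matrix (Fin k) (Fin k) ℝ)
    (a b c : Fin k → (Fin n → ℝ) → ℝ) (p : Fin k → ℕ)
    (hR1pd : ∀ x, (R1 x).PosDef)
    (hR2psd : ∀ x, (R2 x).PosSemidef)
    (ha0 : ∀ j x, 0 ≤ a j x) (hb0 : ∀ j x, 0 ≤ b j x) (hc0 : ∀ j x, 0 ≤ c j x)
    (hbc : ∀ x ∈ feas h g, ∀ j, 0 < b j x + c j x)
    (hpd : ∀ x ∈ feas h g, (R2 x).PosDef ∨ (Matrix.diagonal fun j => a j x).PosDef) :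
    ∀ x ∈ feas h g, (vecF θ h g R1 R2 a b c p x = 0 ↔ x ∈ KKTset θ h g) := by
  intro x hx
  set v := vecv θ h g x
  have hr : ∀ j, 0 ≤ b j x + c j x * max 0 (v j) ^ (2 * p j) := fun j =>
    add_nonneg (hb0 j x) (mul_nonneg (hc0 j x) (pow_nonneg (le_max_left _ _) _))
  have hrv : ∀ j, 0 < v j → 0 < b j x + c j x * max 0 (v j) ^ (2 * p j) := fun j hvj =>
    add_mul_pow_pos (hb0 j x) (hc0 j x) (hbc x hx j) (hvj.trans_le (le_max_right 0 _)) _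
  have hF := nlpField_eq_zero_iff_exists_kkt hx.2 (hH2 x hx) (hR1pd x) (hR2psd x)
    (fun j => ha0 j x) (hpd x hx) hr hrv rfl
  refine hF.trans ?_
  simp only [KKTset, mem_ofPred_eq, hx, true_and, mulVec_transpose, vecMul_eq_sum]
  rfl

/-- Theorem 2.3(c): for `x ∈ S`, `F(x) = 0` iff `x ∈ Φ`. -/
theorem stmt_11
    {n m k : ℕ} (hmn : m < n)
    (θ : (Fin n → ℝ) → ℝ) (h : Fin m → (Fin n → ℝ) → ℝ) (g : Fin k → (Fin n → ℝ) → ℝ)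
    (hθ : ContDiff ℝ 2 θ) (hhC : ∀ i, ContDiff ℝ 2 (h i)) (hgC : ∀ j, ContDiff ℝ 2 (g j))
    (hH1 : hypH1 θ h g) (hH2 : hypH2 h g)
    (R1 : (Fin n → ℝ) → Matrix (Fin n) (Fin n) ℝ)
    (R2 : (Fin n → ℝ) → Matrix (Fin k) (Fin k) ℝ)
    (a b c : Fin k → (Fin n → ℝ) → ℝ) (p : Fin k → ℕ)
    (hR1C : ∀ i j, ContDiff ℝ 1 fun x => R1 x i j)
    (hR1pd : ∀ x, (R1 x).PosDef)
    (hR2C : ∀ i j, ContDiff ℝ 1 fun x => R2 x i j)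
    (hR2psd : ∀ x, (R2 x).PosSemidef)
    (haC : ∀ j, ContDiff ℝ 1 (a j)) (hbC : ∀ j, ContDiff ℝ 1 (b j))
    (hcC : ∀ j, ContDiff ℝ 1 (c j))
    (ha0 : ∀ j x, 0 ≤ a j x) (hb0 : ∀ j x, 0 ≤ b j x) (hc0 : ∀ j x, 0 ≤ c j x)
    (hbc : ∀ x ∈ feas h g, ∀ j, 0 < b j x + c j x)
    (hpd : ∀ x ∈ feas h g, (R2 x).PosDef ∨ (Matrix.diagonal fun j => a j x).PosDef)
    (hp : ∀ j, 1 ≤ p j) :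
    ∀ x ∈ feas h g, (vecF θ h g R1 R2 a b c p x = 0 ↔ x ∈ KKTset θ h g) :=
  stmt_11_general θ h g hH2 R1 R2 a b c p hR1pd hR2psd ha0 hb0 hc0 hbc hpd

end
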